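/- arXiv:2603.24316 — 9 statements merged into one kernel-verified Lean document; each statement's English description precedes it below -/
import Mathlib

section
/- In any feasible solution (t, y, C) of a single-hoist cyclic scheduling instance, the cycle time satisfies C ≥ (d_0 + d_1 + … + d_n) + min_{0 ≤ i ≤ n} e_{i+1,0}. (The hoist trajectory contains all n+1 moves and at least one empty travel back to the load station, so the cycle time is at least the total move duration plus the minimum return travel time.) -/
/-- A single-hoist cyclic scheduling instance. -/
structure HoistInstance where
  /-- number of soaking operations -/
  n : ℕ
  n_pos : 1 ≤ n
  /-- move durations `d 0, …, d n` -/
  d : ℕ → ℝ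
  /-- empty travel times between the tanks of operations `0, …, n+1` -/
  e : ℕ → ℕ → ℝ
  /-- minimum soak times `L 1, …, L n` -/
  L : ℕ → ℝ
  /-- maximum soak times `U 1, …, U n` (the value `∞` is allowed) -/
  U : ℕ → EReal
  d_nonneg : ∀ i, i ≤ n → 0 ≤ d i
  e_nonneg : ∀ i j, i ≤ n + 1 → j ≤ n + 1 → 0 ≤ e i j
  e_symm : ∀ i j, i ≤ n + 1 → j ≤ n + 1 → e i j = e j i
  e_triangle : ∀ i j k, i ≤ n + 1 → j ≤ n + 1 → k ≤ n + 1 → e i k ≤ e i j + e j k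
  e_diag : ∀ i, i ≤ n + 1 → e i i = 0
  e_le_d : ∀ i, i ≤ n → e i (i + 1) ≤ d i
  L_nonneg : ∀ i, 1 ≤ i → i ≤ n → 0 ≤ L i
  L_le_U : ∀ i, 1 ≤ i → i ≤ n → (L i : EReal) ≤ U i

/-- A feasible solution `(t, y, C)` of a single-hoist cyclic scheduling instance. -/
structure Feasible (P : HoistInstance) where
  /-- start times of the moves -/
  t : ℕ → ℝ
  /-- binary ordering variables -/
  y : ℕ → ℕ → ℤ
  /-- the cycle time -/
  C : ℝ
  t_zero : t 0 = 0
  t_nonneg : ∀ i, i ≤ P.n → 0 ≤ t i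
  C_nonneg : 0 ≤ C
  y_binary : ∀ i j, i ≤ P.n → j ≤ P.n → i ≠ j → y i j = 0 ∨ y i j = 1
  y_compl : ∀ i j, i ≤ P.n → j ≤ P.n → i ≠ j → y j i = 1 - y i j
  y_first : ∀ j, 1 ≤ j → j ≤ P.n → y 0 j = 1
  travel : ∀ i j, i ≤ P.n → j ≤ P.n → i ≠ j → y i j = 1 →
    t i + P.d i + P.e (i + 1) j ≤ t j
  cycle : ∀ i, i ≤ P.n → t i + P.d i + P.e (i + 1) 0 ≤ C
  soak_one : ∀ i, 1 ≤ i → i ≤ P.n → y (i - 1) i = 1 →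
    P.L i ≤ t i - (t (i - 1) + P.d (i - 1)) ∧
      ((t i - (t (i - 1) + P.d (i - 1)) : ℝ) : EReal) ≤ P.U i
  soak_zero : ∀ i, 1 ≤ i → i ≤ P.n → y (i - 1) i = 0 →
    P.L i ≤ C + t i - (t (i - 1) + P.d (i - 1)) ∧
      ((C + t i - (t (i - 1) + P.d (i - 1)) : ℝ) : EReal) ≤ P.U i

lemma hoist_key (P : HoistInstance) (F : Feasible P) :
    ∀ S : Finset ℕ, S.Nonempty → S ⊆ Finset.range (P.n + 1) →
      ∃ i ∈ S, ∑ j ∈ S.erase i, P.d j ≤ F.t i := by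
  intro S
  induction S using Finset.strongInduction with
  | _ S IH =>
    intro hne hsub
    obtain ⟨i, hiS, hmax⟩ := S.exists_max_image F.t hne
    have hin : i ≤ P.n := by
      have := hsub hiS; simp [Finset.mem_range] at this; omega
    by_cases hE : (S.erase i).Nonempty
    · obtain ⟨k, hkE, hk⟩ := IH (S.erase i) (Finset.erase_ssubset hiS) hE
        ((S.erase_subset i).trans hsub)
      have hki : k ≠ i := Finset.ne_of_mem_erase hkE
      have hkS : k ∈ S := Finset.mem_of_mem_erase hkE
      have hkn : k ≤ P.n := by
        have := hsub hkS; simp [Finset.mem_range] at this; omega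
      rcases F.y_binary i k hin hkn (Ne.symm hki) with h0 | h1
      · -- y i k = 0, so y k i = 1, travel from k to i
        have hyk : F.y k i = 1 := by
          have := F.y_compl i k hin hkn (Ne.symm hki); omega
        have htr := F.travel k i hkn hin hki hyk
        have he : 0 ≤ P.e (k + 1) i := P.e_nonneg (k + 1) i (by omega) (by omega)
        refine ⟨i, hiS, ?_⟩
        have hsum : ∑ j ∈ S.erase i, P.d j
            = P.d k + ∑ j ∈ (S.erase i).erase k, P.d j :=
          (Finset.add_sum_erase _ _ hkE).symm
        rw [hsum]
        linarith
      · -- y i k = 1, travel from i to k, maximality forces d i = 0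
        have htr := F.travel i k hin hkn (Ne.symm hki) h1
        have he : 0 ≤ P.e (i + 1) k := P.e_nonneg (i + 1) k (by omega) (by omega)
        have hle : F.t k ≤ F.t i := hmax k hkS
        have hdi : P.d i = 0 := le_antisymm (by linarith) (P.d_nonneg i hin)
        refine ⟨k, hkS, ?_⟩
        have hiE : i ∈ S.erase k := Finset.mem_erase.2 ⟨Ne.symm hki, hiS⟩
        have hsum : ∑ j ∈ S.erase k, P.d j
            = P.d i + ∑ j ∈ (S.erase k).erase i, P.d j :=
          (Finset.add_sum_erase _ _ hiE).symm
        rw [hsum, hdi, Finset.erase_right_comm]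
        linarith
    · refine ⟨i, hiS, ?_⟩
      rw [Finset.not_nonempty_iff_eq_empty.1 hE, Finset.sum_empty]
      exact F.t_nonneg i hin

/-- In any feasible solution, the cycle time is at least the total move duration
plus the minimum empty travel time back to the load station. -/
theorem stmt0 (P : HoistInstance) (F : Feasible P) :
    (∑ i ∈ Finset.range (P.n + 1), P.d i) +
      (Finset.range (P.n + 1)).inf' ⟨0, Finset.mem_range.mpr (Nat.succ_pos _)⟩ (fun i => P.e (i + 1) 0) ≤
      F.C := by
  obtain ⟨i, hiS, hi⟩ := hoist_key P F (Finset.range (P.n + 1))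
    Finset.nonempty_range_add_one (subset_refl _)
  have hin : i ≤ P.n := by simp [Finset.mem_range] at hiS; omega
  have hcyc := F.cycle i hin
  have hinf : (Finset.range (P.n + 1)).inf' Finset.nonempty_range_add_one
      (fun i => P.e (i + 1) 0) ≤ P.e (i + 1) 0 :=
    Finset.inf'_le _ hiS
  have hsum : ∑ j ∈ Finset.range (P.n + 1), P.d j
      = P.d i + ∑ j ∈ (Finset.range (P.n + 1)).erase i, P.d j :=
    (Finset.add_sum_erase _ _ hiS).symm
  rw [hsum]
  linarith
end

section
/- In any feasible solution (t, y, C) of a single-hoist cyclic scheduling instance, for every soaking operation i with 1 ≤ i ≤ n the cycle time satisfies C ≥ d_{i−1} + L_i + d_i + e_{i+1,i−1}. (Within one cycle, the execution of move i−1, the soaking of operation i for at least L_i, the execution of move i, and a travel from the tank of operation i+1 back to the tank of operation i−1 are disjoint events.) -/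
/-- In any feasible solution, for every soaking operation `i`, the cycle time is at least
`d (i-1) + L i + d i + e (i+1) (i-1)`. -/
theorem stmt1 (P : HoistInstance) (F : Feasible P) :
    ∀ i, 1 ≤ i → i ≤ P.n →
      P.d (i - 1) + P.L i + P.d i + P.e (i + 1) (i - 1) ≤ F.C := by
  intro i hi1 hin
  have hn := P.n_pos
  rcases eq_or_lt_of_le hi1 with h1 | hi2
  · -- i = 1
    subst h1
    have hy : F.y 0 1 = 1 := F.y_first 1 le_rfl hin
    have hsoak := (F.soak_one 1 le_rfl hin hy).1
    have hcyc := F.cycle 1 hin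
    have ht0 := F.t_zero
    simp only [Nat.sub_self] at hsoak ⊢
    linarith
  · -- i ≥ 2
    have him1 : 1 ≤ i - 1 := by omega
    have him1n : i - 1 ≤ P.n := by omega
    have hne : i - 1 ≠ i := by omega
    rcases F.y_binary (i - 1) i him1n hin hne with hy0 | hy1
    · -- y (i-1) i = 0 : travel from i to i-1
      have hyi : F.y i (i - 1) = 1 := by
        have := F.y_compl (i - 1) i him1n hin hne
        omega
      have htr := F.travel i (i - 1) hin him1n hne.symm hyi
      have hsoak := (F.soak_zero i hi1 hin hy0).1
      linarith
    · -- y (i-1) i = 1 : go via tank 0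
      have hy01 : F.y 0 (i - 1) = 1 := F.y_first (i - 1) him1 him1n
      have h01 : (0 : ℕ) ≠ i - 1 := by omega
      have htr := F.travel 0 (i - 1) (by omega) him1n h01 hy01
      have hsoak := (F.soak_one i hi1 hin hy1).1
      have hcyc := F.cycle i hin
      have ht0 := F.t_zero
      have htri1 := P.e_triangle (i + 1) 0 (i - 1) (by omega) (by omega) (by omega)
      have htri2 := P.e_triangle 0 1 (i - 1) (by omega) (by omega) (by omega)
      have hed : P.e 0 1 ≤ P.d 0 := P.e_le_d 0 (by omega)
      simp only [Nat.zero_add] at htr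
      linarith
end

section
/- Every single-hoist cyclic scheduling instance admits a feasible solution with cycle time C = d_0 + Σ_{i=1}^{n} (L_i + d_i) + e_{n+1,0} (the primitive schedule). Concretely, setting t_0 = 0, t_i = t_{i−1} + d_{i−1} + L_i for 1 ≤ i ≤ n (i.e. t_i = Σ_{k=0}^{i−1} d_k + Σ_{k=1}^{i} L_k), y_{i,j} = 1 for all 0 ≤ i < j ≤ n, and C = t_n + d_n + e_{n+1,0} yields a feasible solution; in particular the minimum feasible cycle time is at most d_0 + Σ_{i=1}^{n}(L_i + d_i) + e_{n+1,0}. -/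
noncomputable def tfun (P : HoistInstance) (i : ℕ) : ℝ :=
  (∑ k ∈ Finset.range i, P.d k) + ∑ k ∈ Finset.Icc 1 i, P.L k

lemma t_diff (P : HoistInstance) (i j : ℕ) (hij : i ≤ j) :
    tfun P j = tfun P i + ((∑ k ∈ Finset.Ico i j, P.d k) + ∑ k ∈ Finset.Icc (i+1) j, P.L k) := by
  unfold tfun
  rw [Finset.range_eq_Ico, Finset.range_eq_Ico,
    ← Finset.sum_Ico_consecutive _ (Nat.zero_le i) hij,
    ← Finset.Ico_add_one_right_eq_Icc, ← Finset.Ico_add_one_right_eq_Icc, ← Finset.Ico_add_one_right_eq_Icc,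
    ← Finset.sum_Ico_consecutive _ (by omega : 1 ≤ i + 1) (by omega : i + 1 ≤ j + 1)]
  ring

lemma d_sum_nonneg (P : HoistInstance) (i j : ℕ) (hj : j ≤ P.n + 1) :
    0 ≤ ∑ k ∈ Finset.Ico i j, P.d k := by
  refine Finset.sum_nonneg fun k hk => P.d_nonneg k ?_
  simp only [Finset.mem_Ico] at hk; omega

lemma L_sum_nonneg (P : HoistInstance) (i j : ℕ) (hi : 1 ≤ i) (hj : j ≤ P.n) :
    0 ≤ ∑ k ∈ Finset.Icc i j, P.L k := by
  refine Finset.sum_nonneg fun k hk => P.L_nonneg k ?_ ?_ <;>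
    simp only [Finset.mem_Icc] at hk <;> omega

lemma e_chain (P : HoistInstance) (i j : ℕ) (hij : i < j) (hj : j ≤ P.n + 1) :
    P.e (i+1) j ≤ ∑ k ∈ Finset.Ico (i+1) j, P.d k := by
  induction j with
  | zero => omega
  | succ j ih =>
    rcases Nat.lt_or_ge i j with h | h
    · have hj' : j ≤ P.n + 1 := by omega
      have h1 := ih h hj'
      have h2 : P.e (i+1) (j+1) ≤ P.e (i+1) j + P.e j (j+1) :=
        P.e_triangle _ _ _ (by omega) (by omega) hj
      have h3 : P.e j (j+1) ≤ P.d j := P.e_le_d j (by omega)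
      rw [Finset.sum_Ico_succ_top (by omega)]
      linarith
    · have : i = j := by omega
      subst this
      simp [P.e_diag _ hj]

/-- Every single-hoist cyclic scheduling instance admits the primitive schedule as a
feasible solution, with cycle time `d 0 + ∑_{i=1}^n (L i + d i) + e (n+1) 0`. -/
theorem stmt2 (P : HoistInstance) :
    ∃ F : Feasible P,
      (∀ i, i ≤ P.n →
        F.t i = (∑ k ∈ Finset.range i, P.d k) + ∑ k ∈ Finset.Icc 1 i, P.L k) ∧
      (∀ i, 1 ≤ i → i ≤ P.n → F.t i = F.t (i - 1) + P.d (i - 1) + P.L i) ∧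
      (∀ i j, i < j → j ≤ P.n → F.y i j = 1) ∧
      F.C = F.t P.n + P.d P.n + P.e (P.n + 1) 0 ∧
      F.C = P.d 0 + (∑ i ∈ Finset.Icc 1 P.n, (P.L i + P.d i)) + P.e (P.n + 1) 0 := by
  have hstep : ∀ i, 1 ≤ i → tfun P i = tfun P (i-1) + P.d (i-1) + P.L i := by
    intro i hi
    obtain ⟨m, rfl⟩ : ∃ m, i = m + 1 := ⟨i - 1, by omega⟩
    rw [t_diff P m (m+1) (by omega)]
    simp [Finset.sum_Ico_succ_top, Finset.Icc_self]
    ring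
  have htnn : ∀ i, i ≤ P.n → 0 ≤ tfun P i := by
    intro i hi
    have h1 := d_sum_nonneg P 0 i (by omega)
    have h2 := L_sum_nonneg P 1 i le_rfl hi
    unfold tfun
    rw [Finset.range_eq_Ico]
    linarith
  have htravel : ∀ i j, i < j → j ≤ P.n →
      tfun P i + P.d i + P.e (i+1) j ≤ tfun P j := by
    intro i j hij hj
    have h1 := t_diff P i j hij.le
    have h2 : ∑ k ∈ Finset.Ico i j, P.d k
        = P.d i + ∑ k ∈ Finset.Ico (i+1) j, P.d k :=
      Finset.sum_eq_sum_Ico_succ_bot hij _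
    have h3 := e_chain P i j hij (by omega)
    have h4 := L_sum_nonneg P (i+1) j (by omega) hj
    linarith
  have hCe : ∀ i, i ≤ P.n →
      tfun P i + P.d i + P.e (i+1) 0 ≤ tfun P P.n + P.d P.n + P.e (P.n+1) 0 := by
    intro i hi
    have h1 := t_diff P i P.n hi
    have h2 : ∑ k ∈ Finset.Ico i (P.n+1), P.d k
        = P.d i + ∑ k ∈ Finset.Ico (i+1) (P.n+1), P.d k :=
      Finset.sum_eq_sum_Ico_succ_bot (by omega) _
    have h2' : ∑ k ∈ Finset.Ico i (P.n+1), P.d k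
        = ∑ k ∈ Finset.Ico i P.n, P.d k + P.d P.n :=
      Finset.sum_Ico_succ_top hi _
    have h3 := e_chain P i (P.n+1) (by omega) le_rfl
    have h4 := L_sum_nonneg P (i+1) P.n (by omega) le_rfl
    have h5 : P.e (i+1) 0 ≤ P.e (i+1) (P.n+1) + P.e (P.n+1) 0 :=
      P.e_triangle _ _ _ (by omega) le_rfl (by omega)
    linarith
  have hCnn : 0 ≤ tfun P P.n + P.d P.n + P.e (P.n+1) 0 := by
    have := htnn P.n le_rfl
    have := P.d_nonneg P.n le_rfl
    have := P.e_nonneg (P.n+1) 0 le_rfl (by omega)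
    linarith
  have hsoak : ∀ i, 1 ≤ i → i ≤ P.n →
      tfun P i - (tfun P (i-1) + P.d (i-1)) = P.L i := by
    intro i hi _
    rw [hstep i hi]; ring
  refine ⟨⟨tfun P, fun i j => if i < j then 1 else 0,
      tfun P P.n + P.d P.n + P.e (P.n+1) 0,
      ?_, htnn, hCnn, ?_, ?_, ?_, ?_, hCe, ?_, ?_⟩, ?_, ?_, ?_, rfl, ?_⟩
  · simp [tfun]
  · intro i j _ _ hij
    by_cases h : i < j <;> simp [h]
  · intro i j _ _ hij
    rcases Nat.lt_or_ge i j with h | h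
    · simp [h, Nat.lt_asymm h]
    · have h' : j < i := by omega
      simp [h', Nat.lt_asymm h']
  · intro j hj _; exact if_pos (by omega : 0 < j)
  · intro i j _ hj _ hy
    have h : i < j := by by_contra h; simp [h] at hy
    exact htravel i j h hj
  · intro i h1 h2 _
    refine ⟨by rw [hsoak i h1 h2], ?_⟩
    rw [hsoak i h1 h2]
    exact P.L_le_U i h1 h2
  · intro i h1 _ hy
    have : i - 1 < i := by omega
    simp [this] at hy
  · intro i _; rfl
  · intro i hi _; exact hstep i hi
  · intro i j hij _; simp [hij]
  · show tfun P P.n + P.d P.n + P.e (P.n+1) 0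
        = P.d 0 + (∑ i ∈ Finset.Icc 1 P.n, (P.L i + P.d i)) + P.e (P.n+1) 0
    have := t_diff P 0 P.n (by omega)
    have h0 : tfun P 0 = 0 := by simp [tfun]
    rw [this, h0, Finset.sum_add_distrib]
    have hsplit : ∑ k ∈ Finset.Ico 0 P.n, P.d k = P.d 0 + ∑ k ∈ Finset.Ico 1 P.n, P.d k :=
      Finset.sum_eq_sum_Ico_succ_bot P.n_pos _
    have hd : ∑ k ∈ Finset.Ico 1 P.n, P.d k + P.d P.n = ∑ k ∈ Finset.Icc 1 P.n, P.d k := by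
      rw [← Finset.Ico_add_one_right_eq_Icc]
      exact (Finset.sum_Ico_succ_top P.n_pos _).symm
    linarith
end

section
/- In any feasible solution (t, y, C) of a single-hoist cyclic scheduling instance, the strengthened soaking inequalities hold unconditionally (independently of the value of y_{i−1,i}): for every 1 ≤ i ≤ n, both t_i − (t_{i−1} + d_{i−1}) ≤ U_i and L_i ≤ (C + t_i) − (t_{i−1} + d_{i−1}). (This is Leung et al.'s observation that the big-M terms can be dropped from the upper-bound part of the within-cycle soaking constraint and from the lower-bound part of the wrap-around soaking constraint.) -/
/-- The strengthened soaking inequalities hold unconditionally in any feasible solution. -/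
theorem stmt3 (P : HoistInstance) (F : Feasible P) :
    ∀ i, 1 ≤ i → i ≤ P.n →
      ((F.t i - (F.t (i - 1) + P.d (i - 1)) : ℝ) : EReal) ≤ P.U i ∧
      P.L i ≤ F.C + F.t i - (F.t (i - 1) + P.d (i - 1)) := by
  intro i h1 hn
  have hne : i - 1 ≠ i := by omega
  have hle : i - 1 ≤ P.n := by omega
  rcases F.y_binary (i-1) i hle hn hne with h | h
  · obtain ⟨hL, hU⟩ := F.soak_zero i h1 hn h
    constructor
    · refine le_trans ?_ hU
      exact_mod_cast by linarith [F.C_nonneg]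
    · exact hL
  · obtain ⟨hL, hU⟩ := F.soak_one i h1 hn h
    constructor
    · exact hU
    · linarith [F.C_nonneg]
end

section
/- In any feasible solution (t, y, C) of a single-hoist cyclic scheduling instance, the wrap-around travel inequality holds for every pair of moves: for every 0 ≤ i ≤ n and every 0 ≤ j ≤ n, C + t_j ≥ t_i + d_i + e_{i+1,j}. (After executing any move i, the hoist can always reach the tank of any move j by the time move j starts in the following cycle; this justifies that consecutive moves across the cycle boundary never violate travel times.) -/
/-- The wrap-around travel inequality holds for every pair of moves in any feasible
solution. -/
theorem stmt4 (P : HoistInstance) (F : Feasible P) :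
    ∀ i j, i ≤ P.n → j ≤ P.n →
      F.t i + P.d i + P.e (i + 1) j ≤ F.C + F.t j := by
  intro i j hi hj
  have hcyc := F.cycle i hi
  rcases Nat.eq_zero_or_pos j with hj0 | hjpos
  · subst hj0
    rw [F.t_zero]
    linarith
  · -- j ≥ 1 : t j ≥ e 0 j
    have hy := F.y_first j hjpos hj
    have htr := F.travel 0 j (Nat.zero_le _) hj (by omega) hy
    rw [F.t_zero] at htr
    have h01 : P.e 0 1 ≤ P.d 0 := P.e_le_d 0 (Nat.zero_le _)
    have htri : P.e 0 j ≤ P.e 0 1 + P.e 1 j :=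
      P.e_triangle 0 1 j (by omega) (by omega) (by omega)
    have htj : P.e 0 j ≤ F.t j := by linarith
    have htri2 : P.e (i + 1) j ≤ P.e (i + 1) 0 + P.e 0 j :=
      P.e_triangle (i + 1) 0 j (by omega) (by omega) (by omega)
    linarith
end

section
/- Formulations that are restricted with respect to the cycle finish can be strictly suboptimal: for the instance ex1, every feasible solution (t, y, C) satisfying the cycle-finish restriction has C ≥ 200, and the restricted solution t = (0, 50, 180), C = 200, y_{0,1} = y_{0,2} = y_{1,2} = 1 attains this bound; since ex1 admits an unrestricted feasible solution with C = 160, the optimum of the restricted formulations (as in Phillips–Unger and Leung et al.) exceeds the true optimum on this instance. -/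
/-- Symmetric travel-time matrix of instance `ex1` on indices `0, 1, 2, 3`. -/
noncomputable def ex1e : ℕ → ℕ → ℝ := fun i j =>
  ((([[0, 10, 20, 0], [10, 0, 10, 10], [20, 10, 0, 20], [0, 10, 20, 0]] :
      List (List ℝ)).getD i []).getD j 0)

/-- Move durations of instance `ex1`: `d = (10, 10, 20)`. -/
noncomputable def ex1d : ℕ → ℝ := fun i => ([10, 10, 20] : List ℝ).getD i 0

/-- Minimum soak times of instance `ex1`: `L 1 = 40`, `L 2 = 120`. -/
noncomputable def ex1L : ℕ → ℝ := fun i => if i = 1 then 40 else 120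

/-- Maximum soak times of instance `ex1`: `U 1 = 100`, `U 2 = ∞`. -/
noncomputable def ex1U : ℕ → EReal := fun i => if i = 1 then 100 else ⊤

/-- `(t, y, C)` is a feasible solution of instance `ex1` (which has `n = 2`). -/
def ex1Feasible (t : ℕ → ℝ) (y : ℕ → ℕ → ℤ) (C : ℝ) : Prop :=
  t 0 = 0 ∧ (∀ i, i ≤ 2 → 0 ≤ t i) ∧ 0 ≤ C ∧
  (∀ i j, i ≤ 2 → j ≤ 2 → i ≠ j → y i j = 0 ∨ y i j = 1) ∧
  (∀ i j, i ≤ 2 → j ≤ 2 → i ≠ j → y j i = 1 - y i j) ∧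
  (∀ j, 1 ≤ j → j ≤ 2 → y 0 j = 1) ∧
  (∀ i j, i ≤ 2 → j ≤ 2 → i ≠ j → y i j = 1 → t i + ex1d i + ex1e (i + 1) j ≤ t j) ∧
  (∀ i, i ≤ 2 → t i + ex1d i + ex1e (i + 1) 0 ≤ C) ∧
  (∀ i, 1 ≤ i → i ≤ 2 → y (i - 1) i = 1 →
    ex1L i ≤ t i - (t (i - 1) + ex1d (i - 1)) ∧
    ((t i - (t (i - 1) + ex1d (i - 1)) : ℝ) : EReal) ≤ ex1U i) ∧
  (∀ i, 1 ≤ i → i ≤ 2 → y (i - 1) i = 0 →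
    ex1L i ≤ C + t i - (t (i - 1) + ex1d (i - 1)) ∧
    ((C + t i - (t (i - 1) + ex1d (i - 1)) : ℝ) : EReal) ≤ ex1U i)

/-- The cycle-finish restriction for instance `ex1`: the cycle ends exactly when the
hoist returns to the load station after the latest move. -/
def ex1Restricted (t : ℕ → ℝ) (C : ℝ) : Prop :=
  ∃ istar, 1 ≤ istar ∧ istar ≤ 2 ∧ (∀ j, 1 ≤ j → j ≤ 2 → t j ≤ t istar) ∧
    C = t istar + ex1d istar + ex1e (istar + 1) 0

/-- Move start times of the restricted optimal solution: `t = (0, 50, 180)`. -/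
noncomputable def ex1t' : ℕ → ℝ := fun i => ([0, 50, 180] : List ℝ).getD i 0

/-- Ordering variables of the restricted optimal solution: `y i j = 1` iff `i < j`. -/
def ex1y' : ℕ → ℕ → ℤ := fun i j => if i < j then 1 else 0

/-- For instance `ex1`: every feasible solution satisfying the cycle-finish restriction
has `C ≥ 200`; the exhibited restricted solution attains `C = 200`; yet `ex1` admits an
unrestricted feasible solution with `C = 160 < 200`, so the restricted formulations are
strictly suboptimal on this instance. -/
theorem stmt10 :
    (∀ t y C, ex1Feasible t y C → ex1Restricted t C → 200 ≤ C) ∧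
    (ex1Feasible ex1t' ex1y' 200 ∧ ex1Restricted ex1t' 200) ∧
    (∃ t y C, ex1Feasible t y C ∧ C = 160) ∧
    (160 : ℝ) < 200 := by
  refine ⟨?_, ⟨?_, ?_⟩, ?_, by norm_num⟩
  · rintro t y C ⟨ht0, htpos, hC0, hy01, hysym, hy0, htrav, hcyc, hsoak1, hsoak0⟩
      ⟨i, hi1, hi2, hmax, hC⟩
    have h01 : y 0 1 = 1 := hy0 1 (by norm_num) (by norm_num)
    have hs1 := hsoak1 1 (by norm_num) (by norm_num) (by simpa using h01)
    have ht1lb : (40:ℝ) ≤ t 1 - (t 0 + ex1d 0) := by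
      have := hs1.1; norm_num [ex1L] at this ⊢; linarith
    have ht1ub : t 1 - (t 0 + ex1d 0) ≤ 100 := by
      have h := hs1.2
      rw [show ex1U 1 = ((100:ℝ):EReal) from rfl] at h
      exact EReal.coe_le_coe_iff.mp h
    have h2pos := htpos 2 (by norm_num)
    rcases hy01 1 2 (by norm_num) (by norm_num) (by norm_num) with h12 | h12
    · -- y 1 2 = 0 : infeasible under the restriction
      have h21 : y 2 1 = 1 := by
        have := hysym 1 2 (by norm_num) (by norm_num) (by norm_num); omega
      have htr := htrav 2 1 (by norm_num) (by norm_num) (by norm_num) h21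
      have hs2 := (hsoak0 2 (by norm_num) (by norm_num) (by simpa using h12)).1
      interval_cases i
      · norm_num [ex1d, ex1e, ex1L] at ht1lb ht1ub htr hs2 hC
        linarith
      · have := hmax 1 (by norm_num) (by norm_num)
        norm_num [ex1d, ex1e] at htr
        linarith
    · -- y 1 2 = 1
      have hs2 := (hsoak1 2 (by norm_num) (by norm_num) (by simpa using h12)).1
      interval_cases i
      · have := hmax 2 (by norm_num) (by norm_num)
        norm_num [ex1d, ex1L] at hs2
        linarith
      · norm_num [ex1d, ex1e, ex1L] at ht1lb ht1ub hs2 hC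
        linarith
  · -- restricted solution is feasible
    refine ⟨by norm_num [ex1t'], ?_, by norm_num, ?_, ?_, ?_, ?_, ?_, ?_, ?_⟩
    · intro i hi; interval_cases i <;> norm_num [ex1t']
    · intro i j hi hj hij; interval_cases i <;> interval_cases j <;>
        simp_all [ex1y']
    · intro i j hi hj hij; interval_cases i <;> interval_cases j <;>
        simp_all [ex1y']
    · intro j hj1 hj2; interval_cases j <;> norm_num [ex1y']
    · intro i j hi hj hij hy; interval_cases i <;> interval_cases j <;>
        simp_all [ex1y', ex1t', ex1d, ex1e] <;> norm_num
    · intro i hi; interval_cases i <;> norm_num [ex1t', ex1d, ex1e]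
    · intro i hi1 hi2 hy; interval_cases i <;>
        norm_num [ex1t', ex1d, ex1L, ex1U] <;>
        exact EReal.coe_le_coe_iff.mpr (by norm_num)
    · intro i hi1 hi2 hy; interval_cases i <;> simp_all [ex1y']
  · exact ⟨2, (by norm_num), (by norm_num), (by intro j h1 h2; interval_cases j <;> norm_num [ex1t']), by norm_num [ex1t', ex1d, ex1e]⟩
  · refine ⟨fun i => if i = 1 then 110 else if i = 2 then 80 else 0,
      fun i j => if i = 0 ∨ (i = 2 ∧ j = 1) then 1 else 0, 160,
      ⟨by norm_num, ?_, by norm_num, ?_, ?_, ?_, ?_, ?_, ?_, ?_⟩, rfl⟩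
    · intro i hi; interval_cases i <;> norm_num
    · intro i j hi hj hij; interval_cases i <;> interval_cases j <;> simp_all
    · intro i j hi hj hij; interval_cases i <;> interval_cases j <;> simp_all
    · intro j h1 h2; interval_cases j <;> norm_num
    · intro i j hi hj hij hy; interval_cases i <;> interval_cases j <;>
        simp_all [ex1d, ex1e] <;> norm_num
    · intro i hi; interval_cases i <;> norm_num [ex1d, ex1e]
    · intro i h1 h2 hy
      interval_cases i
      · simp_all [ex1L, ex1U, ex1d]
        refine ⟨by norm_num, ?_⟩
        rw [show ((110:ℝ):EReal) - ((10:ℝ):EReal) = (((100:ℝ)):EReal) from by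
          rw [← EReal.coe_sub]; norm_num]
        exact EReal.coe_le_coe_iff.mpr (by norm_num)
      · simp_all [ex1L, ex1U, ex1d]
    · intro i h1 h2 hy; interval_cases i <;> simp_all [ex1L, ex1U, ex1d] <;> norm_num
end

section
/- Consider a single-hoist cyclic scheduling instance in which a distinguished bottleneck operation b (1 ≤ b ≤ n) is processed according to an m-period pattern for an integer m ≥ 1, i.e. the soaking constraint at index b is replaced by: if y_{b−1,b} = 1 then L_b ≤ ((m−1)·C + t_b) − (t_{b−1} + d_{b−1}) ≤ U_b, and if y_{b−1,b} = 0 then L_b ≤ (m·C + t_b) − (t_{b−1} + d_{b−1}) ≤ U_b (all other constraints of a feasible solution being unchanged). Then every feasible solution satisfies L_b ≤ m·C, and moreover (m−1)·C ≤ U_b; equivalently, L_b/m ≤ C and, when m ≥ 2 and U_b < ∞, C ≤ U_b/(m−1). -/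
/-- For a bottleneck operation `b` processed according to an `m`-period pattern,
every feasible solution satisfies `L b ≤ m·C` and `(m−1)·C ≤ U b`; equivalently
`L b / m ≤ C` and, when `m ≥ 2` and `U b < ∞`, `C ≤ U b / (m−1)`. -/
theorem stmt11 (P : HoistInstance) (b m : ℕ)
    (hb1 : 1 ≤ b) (hbn : b ≤ P.n) (hm : 1 ≤ m)
    (t : ℕ → ℝ) (y : ℕ → ℕ → ℤ) (C : ℝ)
    (t_zero : t 0 = 0)
    (t_nonneg : ∀ i, i ≤ P.n → 0 ≤ t i)
    (C_nonneg : 0 ≤ C)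
    (y_binary : ∀ i j, i ≤ P.n → j ≤ P.n → i ≠ j → y i j = 0 ∨ y i j = 1)
    (y_compl : ∀ i j, i ≤ P.n → j ≤ P.n → i ≠ j → y j i = 1 - y i j)
    (y_first : ∀ j, 1 ≤ j → j ≤ P.n → y 0 j = 1)
    (travel : ∀ i j, i ≤ P.n → j ≤ P.n → i ≠ j → y i j = 1 →
      t i + P.d i + P.e (i + 1) j ≤ t j)
    (cycle : ∀ i, i ≤ P.n → t i + P.d i + P.e (i + 1) 0 ≤ C)
    (soak_one : ∀ i, 1 ≤ i → i ≤ P.n → i ≠ b → y (i - 1) i = 1 →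
      P.L i ≤ t i - (t (i - 1) + P.d (i - 1)) ∧
      ((t i - (t (i - 1) + P.d (i - 1)) : ℝ) : EReal) ≤ P.U i)
    (soak_zero : ∀ i, 1 ≤ i → i ≤ P.n → i ≠ b → y (i - 1) i = 0 →
      P.L i ≤ C + t i - (t (i - 1) + P.d (i - 1)) ∧
      ((C + t i - (t (i - 1) + P.d (i - 1)) : ℝ) : EReal) ≤ P.U i)
    (soak_b_one : y (b - 1) b = 1 →
      P.L b ≤ ((m : ℝ) - 1) * C + t b - (t (b - 1) + P.d (b - 1)) ∧
      ((((m : ℝ) - 1) * C + t b - (t (b - 1) + P.d (b - 1)) : ℝ) : EReal) ≤ P.U b)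
    (soak_b_zero : y (b - 1) b = 0 →
      P.L b ≤ (m : ℝ) * C + t b - (t (b - 1) + P.d (b - 1)) ∧
      (((m : ℝ) * C + t b - (t (b - 1) + P.d (b - 1)) : ℝ) : EReal) ≤ P.U b) :
    P.L b ≤ (m : ℝ) * C ∧
    ((((m : ℝ) - 1) * C : ℝ) : EReal) ≤ P.U b ∧
    P.L b / (m : ℝ) ≤ C ∧
    (2 ≤ m → P.U b < ⊤ → C ≤ (P.U b).toReal / ((m : ℝ) - 1)) := by

  have hbn1 : b - 1 ≤ P.n := le_trans (Nat.sub_le _ _) hbn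
  have hne : b - 1 ≠ b := by omega
  have hsub : b - 1 + 1 = b := Nat.sub_add_cancel hb1
  have hd1 : 0 ≤ P.d (b - 1) := P.d_nonneg _ hbn1
  have htb1 : 0 ≤ t (b - 1) := t_nonneg _ hbn1
  have htb : 0 ≤ t b := t_nonneg _ hbn
  have htbC : t b ≤ C := by
    have hc := cycle b hbn
    have := P.d_nonneg b hbn
    have := P.e_nonneg (b+1) 0 (by omega) (by omega)
    linarith
  have key : P.L b ≤ (m:ℝ) * C ∧ ((((m:ℝ)-1)*C : ℝ) : EReal) ≤ P.U b := by
    rcases y_binary (b-1) b hbn1 hbn hne with h0 | h1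
    · -- y (b-1) b = 0
      have hy : y b (b-1) = 1 := by
        have := y_compl (b-1) b hbn1 hbn hne; omega
      have htr := travel b (b-1) hbn hbn1 (by omega) hy
      have he : 0 ≤ P.e (b+1) (b-1) := P.e_nonneg _ _ (by omega) (by omega)
      have hdb : 0 ≤ P.d b := P.d_nonneg b hbn
      have hle : t b ≤ t (b-1) := by linarith
      obtain ⟨hL, hU⟩ := soak_b_zero h0
      have hc := cycle (b-1) hbn1
      rw [hsub] at hc
      have he0 : 0 ≤ P.e b 0 := P.e_nonneg _ _ (by omega) (by omega)
      constructor
      · linarith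
      · refine le_trans ?_ hU
        rw [EReal.coe_le_coe_iff]
        linarith
    · -- y (b-1) b = 1
      have htr := travel (b-1) b hbn1 hbn hne h1
      rw [hsub] at htr
      have hed : P.e b b = 0 := P.e_diag b (by omega)
      rw [hed] at htr
      obtain ⟨hL, hU⟩ := soak_b_one h1
      constructor
      · linarith
      · refine le_trans ?_ hU
        rw [EReal.coe_le_coe_iff]
        linarith
  obtain ⟨h1, h2⟩ := key
  have hmpos : (0:ℝ) < (m:ℝ) := by exact_mod_cast hm
  refine ⟨h1, h2, ?_, ?_⟩
  · rw [div_le_iff₀ hmpos]; linarith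
  · intro hm2 hUtop
    have hUbot : P.U b ≠ ⊥ := by
      intro h
      have := P.L_le_U b hb1 hbn
      rw [h] at this
      exact (EReal.coe_ne_bot _) (le_bot_iff.mp this)
    have hreal : ((m:ℝ)-1)*C ≤ (P.U b).toReal := by
      have := EReal.toReal_le_toReal h2 (EReal.coe_ne_bot _) (ne_of_lt hUtop)
      rwa [EReal.toReal_coe] at this
    have hm1 : (0:ℝ) < (m:ℝ) - 1 := by
      have : (2:ℝ) ≤ (m:ℝ) := by exact_mod_cast hm2
      linarith
    rw [le_div_iff₀ hm1]
    linarith [hreal]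
end

section
/- The valid inequalities of Leung et al. are indeed valid: consider a single-hoist cyclic scheduling instance with strictly positive move durations d_i > 0 for all 0 ≤ i ≤ n, and a feasible solution (t, y, C) extended by z_i ∈ {0,1} for 1 ≤ i ≤ n and t_max ∈ ℝ satisfying Σ_{i=1}^{n} z_i = 1, t_max ≥ t_i for all 1 ≤ i ≤ n, and (z_i = 1 implies t_max ≤ t_i). Then for all 1 ≤ i, j ≤ n with i ≠ j: (a) y_{i,j} ≤ 1 − z_i (the latest move has no successor); (b) z_j ≤ y_{i,j} (every other move precedes the latest move); and (c) 1 − z_i ≤ Σ_{j ∈ {1,…,n}, j ≠ i} y_{i,j} (every non-latest move has at least one successor). -/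
/-- The valid inequalities of Leung et al.: for a feasible solution with strictly
positive move durations, extended by latest-move indicators `z` and `t_max`,
(a) the latest move has no successor, (b) every other move precedes the latest move,
and (c) every non-latest move has at least one successor. -/
theorem stmt12 (P : HoistInstance) (F : Feasible P)
    (hd : ∀ i, i ≤ P.n → 0 < P.d i)
    (z : ℕ → ℤ) (tmax : ℝ)
    (hz : ∀ i, 1 ≤ i → i ≤ P.n → z i = 0 ∨ z i = 1)
    (hzsum : ∑ i ∈ Finset.Icc 1 P.n, z i = 1)
    (htmax : ∀ i, 1 ≤ i → i ≤ P.n → F.t i ≤ tmax)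
    (htmax' : ∀ i, 1 ≤ i → i ≤ P.n → z i = 1 → tmax ≤ F.t i) :
    (∀ i j, 1 ≤ i → i ≤ P.n → 1 ≤ j → j ≤ P.n → i ≠ j →
      F.y i j ≤ 1 - z i ∧ z j ≤ F.y i j) ∧
    (∀ i, 1 ≤ i → i ≤ P.n →
      1 - z i ≤ ∑ j ∈ (Finset.Icc 1 P.n).erase i, F.y i j) := by
  have hlt : ∀ i j, i ≤ P.n → j ≤ P.n → i ≠ j → F.y i j = 1 → F.t i < F.t j := by
    intro i j hi hj hij hy
    have := F.travel i j hi hj hij hy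
    have he := P.e_nonneg (i+1) j (by omega) (by omega)
    have := hd i hi
    linarith
  have partb : ∀ i j, 1 ≤ i → i ≤ P.n → 1 ≤ j → j ≤ P.n → i ≠ j → z j = 1 → F.y i j = 1 := by
    intro i j hi1 hi hj1 hj hij hzj
    rcases F.y_binary i j hi hj hij with h0 | h1
    · exfalso
      have hji : F.y j i = 1 := by
        have := F.y_compl i j hi hj hij; omega
      have h1 := hlt j i hj hi (Ne.symm hij) hji
      have h2 := htmax i hi1 hi
      have h3 := htmax' j hj1 hj hzj
      linarith
    · exact h1
  constructor
  · intro i j hi1 hi hj1 hj hij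
    constructor
    · rcases hz i hi1 hi with h0 | h1
      · rw [h0]
        rcases F.y_binary i j hi hj hij with h | h <;> omega
      · rw [h1]
        rcases F.y_binary i j hi hj hij with h | h
        · omega
        · exfalso
          have h2 := hlt i j hi hj hij h
          have h3 := htmax j hj1 hj
          have h4 := htmax' i hi1 hi h1
          linarith
    · rcases hz j hj1 hj with h0 | h1
      · rw [h0]
        rcases F.y_binary i j hi hj hij with h | h <;> omega
      · rw [h1, partb i j hi1 hi hj1 hj hij h1]
  · intro i hi1 hi
    have hnn : ∀ j ∈ (Finset.Icc 1 P.n).erase i, (0 : ℤ) ≤ F.y i j := by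
      intro j hjmem
      have hji := Finset.ne_of_mem_erase hjmem
      have hj := Finset.mem_of_mem_erase hjmem
      rw [Finset.mem_Icc] at hj
      rcases F.y_binary i j hi hj.2 (Ne.symm hji) with h | h <;> omega
    rcases hz i hi1 hi with h0 | h1
    · have hex : ∃ j ∈ Finset.Icc 1 P.n, z j = 1 := by
        by_contra hc
        push_neg at hc
        have : ∑ j ∈ Finset.Icc 1 P.n, z j = 0 := by
          apply Finset.sum_eq_zero
          intro j hjm
          rcases Finset.mem_Icc.mp hjm with ⟨a, b⟩
          rcases hz j a b with h | h
          · exact h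
          · exact absurd h (hc j hjm)
        omega
      obtain ⟨j, hjm, hzj⟩ := hex
      rcases Finset.mem_Icc.mp hjm with ⟨hj1, hj⟩
      have hij : i ≠ j := by
        rintro rfl; omega
      have hy := partb i j hi1 hi hj1 hj hij hzj
      have hle := Finset.single_le_sum hnn
        (Finset.mem_erase.mpr ⟨Ne.symm hij, hjm⟩)
      rw [h0]
      omega
    · rw [h1]
      have := Finset.sum_nonneg hnn
      omega
end

section
/- For the associated load–unload configuration, the adjusted primitive schedule is feasible: consider a single-hoist cyclic scheduling instance together with loading/unloading lower bounds L_0 ≥ 0 and L_{n+1} ≥ 0, where a feasible associated solution is a feasible solution (t, y, C) additionally satisfying (t_n + d_n) + L_{n+1} + L_0 ≤ C. Then setting t_0 = 0, t_i = t_{i−1} + d_{i−1} + L_i for 1 ≤ i ≤ n, y_{i,j} = 1 for all 0 ≤ i < j ≤ n, and C = t_n + d_n + max{e_{n+1,0}, L_0 + L_{n+1}} yields a feasible associated solution; in particular the minimum associated cycle time is at most d_0 + Σ_{i=1}^{n}(L_i + d_i) + max{e_{n+1,0}, L_0 + L_{n+1}}. -/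
private lemma chainE (P : HoistInstance) :
    ∀ i j, i ≤ j → j ≤ P.n + 1 → P.e i j ≤ ∑ k ∈ Finset.Ico i j, P.d k := by
  intro i j hij hjn
  induction j, hij using Nat.le_induction with
  | base => simp [P.e_diag i hjn]
  | succ j hij ih =>
    have hj : j ≤ P.n := Nat.lt_succ_iff.mp hjn
    have h1 : P.e i (j + 1) ≤ P.e i j + P.e j (j + 1) :=
      P.e_triangle i j (j + 1) (by omega) (by omega) hjn
    have h2 := P.e_le_d j hj
    have h3 := ih (by omega)
    rw [Finset.sum_Ico_succ_top hij]
    linarith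

/-- For the associated load–unload configuration with loading/unloading lower bounds
`L0` and `Ln1`, the adjusted primitive schedule is a feasible associated solution; in
particular the minimum associated cycle time is at most
`d 0 + ∑_{i=1}^n (L i + d i) + max (e (n+1) 0) (L0 + Ln1)`. -/
theorem stmt14 (P : HoistInstance) (L0 Ln1 : ℝ) (hL0 : 0 ≤ L0) (hLn1 : 0 ≤ Ln1) :
    ∃ F : Feasible P,
      (∀ i, i ≤ P.n →
        F.t i = (∑ k ∈ Finset.range i, P.d k) + ∑ k ∈ Finset.Icc 1 i, P.L k) ∧
      (∀ i, 1 ≤ i → i ≤ P.n → F.t i = F.t (i - 1) + P.d (i - 1) + P.L i) ∧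
      (∀ i j, i < j → j ≤ P.n → F.y i j = 1) ∧
      F.C = F.t P.n + P.d P.n + max (P.e (P.n + 1) 0) (L0 + Ln1) ∧
      F.t P.n + P.d P.n + Ln1 + L0 ≤ F.C ∧
      F.C = P.d 0 + (∑ i ∈ Finset.Icc 1 P.n, (P.L i + P.d i)) +
        max (P.e (P.n + 1) 0) (L0 + Ln1) := by
  set tS : ℕ → ℝ := fun i => (∑ k ∈ Finset.range i, P.d k) + ∑ k ∈ Finset.Icc 1 i, P.L k
    with htS
  have hsplit : ∀ i j, i ≤ j →
      tS j = tS i + (∑ k ∈ Finset.Ico i j, P.d k) + ∑ k ∈ Finset.Ico (i+1) (j+1), P.L k := by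
    intro i j hij
    simp only [htS]
    rw [Finset.range_eq_Ico, Finset.range_eq_Ico,
      ← Finset.sum_Ico_consecutive P.d (Nat.zero_le i) hij]
    have hIc : ∀ m : ℕ, Finset.Icc 1 m = Finset.Ico 1 (m+1) := by
      intro m; rw [Finset.Ico_add_one_right_eq_Icc]
    rw [hIc, hIc, ← Finset.sum_Ico_consecutive P.L (by omega : 1 ≤ i + 1) (by omega)]
    ring
  have hd_sum_nonneg : ∀ i j, j ≤ P.n + 1 → 0 ≤ ∑ k ∈ Finset.Ico i j, P.d k := by
    intro i j hj
    refine Finset.sum_nonneg fun k hk => P.d_nonneg k ?_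
    have := (Finset.mem_Ico.mp hk).2; omega
  have hL_sum_nonneg : ∀ i j, j ≤ P.n + 1 → 0 ≤ ∑ k ∈ Finset.Ico (i+1) j, P.L k := by
    intro i j hj
    refine Finset.sum_nonneg fun k hk => P.L_nonneg k ?_ ?_ <;>
      · have := Finset.mem_Ico.mp hk; omega
  have htnn : ∀ i, i ≤ P.n → 0 ≤ tS i := by
    intro i hi
    have h1 : 0 ≤ ∑ k ∈ Finset.range i, P.d k := by
      rw [Finset.range_eq_Ico]; exact hd_sum_nonneg 0 i (by omega)
    have h2 : 0 ≤ ∑ k ∈ Finset.Icc 1 i, P.L k := by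
      rw [show Finset.Icc 1 i = Finset.Ico (0+1) (i+1) by rw [Finset.Ico_add_one_right_eq_Icc]]
      exact hL_sum_nonneg 0 (i+1) (by omega)
    simp only [htS]; linarith
  have htravel : ∀ i j, i < j → j ≤ P.n → tS i + P.d i + P.e (i+1) j ≤ tS j := by
    intro i j hij hj
    have h1 := hsplit i j hij.le
    rw [Finset.sum_eq_sum_Ico_succ_bot hij P.d] at h1
    have h2 : P.e (i+1) j ≤ ∑ k ∈ Finset.Ico (i+1) j, P.d k :=
      chainE P (i+1) j hij (by omega)
    have h3 := hL_sum_nonneg i (j+1) (by omega)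
    linarith
  have hstep : ∀ m, tS (m+1) = tS m + P.d m + P.L (m+1) := by
    intro m
    have h := hsplit m (m+1) (Nat.le_succ m)
    rw [Finset.sum_Ico_succ_top le_rfl, Finset.Ico_self, Finset.sum_empty,
      Finset.sum_Ico_succ_top le_rfl, Finset.Ico_self, Finset.sum_empty] at h
    linarith
  set C : ℝ := tS P.n + P.d P.n + max (P.e (P.n + 1) 0) (L0 + Ln1) with hC
  have hcyc : ∀ i, i ≤ P.n → tS i + P.d i + P.e (i + 1) 0 ≤ C := by
    intro i hi
    have h1 := hsplit i P.n hi
    have h2 : tS P.n + P.d P.n =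
        tS i + (∑ k ∈ Finset.Ico i (P.n+1), P.d k) + ∑ k ∈ Finset.Ico (i+1) (P.n+1), P.L k := by
      rw [Finset.sum_Ico_succ_top hi]; linarith
    rw [Finset.sum_eq_sum_Ico_succ_bot (by omega : i < P.n + 1) P.d] at h2
    have h3 : P.e (i+1) 0 ≤ P.e (i+1) (P.n+1) + P.e (P.n+1) 0 :=
      P.e_triangle (i+1) (P.n+1) 0 (by omega) le_rfl (by omega)
    have h4 : P.e (i+1) (P.n+1) ≤ ∑ k ∈ Finset.Ico (i+1) (P.n+1), P.d k :=
      chainE P (i+1) (P.n+1) (by omega) le_rfl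
    have h5 := hL_sum_nonneg i (P.n+1) le_rfl
    have h6 : P.e (P.n+1) 0 ≤ max (P.e (P.n + 1) 0) (L0 + Ln1) := le_max_left _ _
    simp only [hC]
    linarith
  refine ⟨⟨tS, fun i j => if i < j then 1 else 0, C, ?_, htnn, ?_, ?_, ?_, ?_, ?_, hcyc,
      ?_, ?_⟩, fun i _ => rfl, ?_, ?_, rfl, ?_, ?_⟩
  · simp [htS]
  · -- C_nonneg
    have := htnn P.n le_rfl
    have := P.d_nonneg P.n le_rfl
    have h6 : P.e (P.n+1) 0 ≤ max (P.e (P.n + 1) 0) (L0 + Ln1) := le_max_left _ _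
    have := P.e_nonneg (P.n+1) 0 le_rfl (by omega)
    simp only [hC]; linarith
  · intro i j _ _ _; by_cases h : i < j <;> simp [h]
  · intro i j _ _ hne
    rcases Nat.lt_or_ge i j with h | h
    · simp [h, Nat.lt_asymm h]
    · have h' : j < i := lt_of_le_of_ne h hne.symm
      simp [h', Nat.lt_asymm h', not_lt.mpr h]
  · intro j hj _; simp [Nat.lt_of_lt_of_le Nat.zero_lt_one hj]
  · intro i j hi hj hne hy
    have h : i < j := by by_contra h; simp [h] at hy
    exact htravel i j h hj
  · -- soak_one
    intro i hi hin _
    obtain ⟨m, rfl⟩ : ∃ m, i = m + 1 := ⟨i - 1, by omega⟩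
    have h := hstep m
    simp only [Nat.add_sub_cancel]
    constructor
    · linarith
    · have : tS (m+1) - (tS m + P.d m) = P.L (m+1) := by linarith
      rw [this]
      exact P.L_le_U (m+1) hi hin
  · -- soak_zero (vacuous)
    intro i hi hin hy
    exfalso
    have : (i : ℕ) - 1 < i := by omega
    simp [this] at hy
  · -- t recurrence
    intro i hi hin
    obtain ⟨m, rfl⟩ : ∃ m, i = m + 1 := ⟨i - 1, by omega⟩
    simp only [Nat.add_sub_cancel]
    exact hstep m
  · intro i j hij _; simp [hij]
  · -- lower bound on C
    have h6 : L0 + Ln1 ≤ max (P.e (P.n + 1) 0) (L0 + Ln1) := le_max_right _ _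
    simp only [hC]; linarith
  · -- closed form of C
    have hr : ∑ k ∈ Finset.range (P.n+1), P.d k = P.d 0 + ∑ k ∈ Finset.Icc 1 P.n, P.d k := by
      rw [Finset.range_eq_Ico, Finset.sum_eq_sum_Ico_succ_bot (by omega) P.d,
        Finset.Ico_add_one_right_eq_Icc]
    have h1 : tS P.n + P.d P.n =
        ∑ k ∈ Finset.range (P.n+1), P.d k + ∑ k ∈ Finset.Icc 1 P.n, P.L k := by
      simp only [htS, Finset.sum_range_succ]; ring
    simp only [hC]
    rw [h1, hr, Finset.sum_add_distrib]
    ring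
end
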